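/- (Soundness of the final automaton) Fix an fLTL\GU formula φ and let A be the final automaton for φ, the product of the master LTS M and the slave product P, with acceptance condition ⋁_{R ⊆ Rec} (Acc_M(R) ∧ Acc(R)). Then for every infinite word w: if w ∈ L(A) then w ⊨ φ. -/

import Mathlib

open Filter

attribute [local instance] Classical.propDecidable

noncomputable section

namespace Paper

/-- Comparison extremes: limit inferior or limit superior. -/
inductive Ext where
  | inf : Ext
  | sup : Ext

/-- Comparison operators `≥` and `>`. -/
inductive Cmp where
  | ge : Cmp
  | gt : Cmp

/-- Interpretation of a comparison operator on reals. -/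
def Cmp.rel : Cmp → ℝ → ℝ → Prop
  | .ge, x, y => x ≥ y
  | .gt, x, y => x > y

/-- Cesàro averages of a real sequence. -/
def cesaro (q : ℕ → ℝ) (n : ℕ) : ℝ := (∑ j ∈ Finset.range n, q j) / (n : ℝ)

/-- `lr_inf`/`lr_sup`: liminf/limsup of the Cesàro averages. -/
def lr : Ext → (ℕ → ℝ) → ℝ
  | .inf, q => Filter.liminf (cesaro q) Filter.atTop
  | .sup, q => Filter.limsup (cesaro q) Filter.atTop

/-- Real-valued indicator of a proposition. -/
def ind (P : Prop) : ℝ := if P then 1 else 0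

/-- Formulas of frequency LTL (fLTL) over atomic propositions `Ap`,
in negation normal form. -/
inductive FLTL (Ap : Type) where
  | tt : FLTL Ap
  | ff : FLTL Ap
  | atom (a : Ap) : FLTL Ap
  | natom (a : Ap) : FLTL Ap
  | conj (φ ψ : FLTL Ap) : FLTL Ap
  | disj (φ ψ : FLTL Ap) : FLTL Ap
  | next (φ : FLTL Ap) : FLTL Ap
  | fut (φ : FLTL Ap) : FLTL Ap
  | glob (φ : FLTL Ap) : FLTL Ap
  | untl (φ ψ : FLTL Ap) : FLTL Ap
  | freq (e : Ext) (c : Cmp) (p : ℚ) (φ : FLTL Ap) : FLTL Ap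

/-- Infinite words over the alphabet `2^Ap`. -/
abbrev Word (Ap : Type) := ℕ → Set Ap

/-- The suffix `w^k` of an infinite word. -/
def suffixW {Ap : Type} (w : Word Ap) (k : ℕ) : Word Ap := fun i => w (k + i)

/-- Semantics of fLTL: `Sat φ w` means `w ⊨ φ`. -/
def Sat {Ap : Type} : FLTL Ap → Word Ap → Prop
  | .tt, _ => True
  | .ff, _ => False
  | .atom a, w => a ∈ w 0
  | .natom a, w => a ∉ w 0
  | .conj φ ψ, w => Sat φ w ∧ Sat ψ w
  | .disj φ ψ, w => Sat φ w ∨ Sat ψ w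
  | .next φ, w => Sat φ (suffixW w 1)
  | .fut φ, w => ∃ k, Sat φ (suffixW w k)
  | .glob φ, w => ∀ k, Sat φ (suffixW w k)
  | .untl φ ψ, w => ∃ k, Sat ψ (suffixW w k) ∧ ∀ j < k, Sat φ (suffixW w j)
  | .freq e c p φ, w => c.rel (lr e (fun i => ind (Sat φ (suffixW w i)))) (p : ℝ)

/-- `U`-free formulas (the grammar `ξ` of the fragment). -/
def UFree {Ap : Type} : FLTL Ap → Prop
  | .conj φ ψ => UFree φ ∧ UFree ψ
  | .disj φ ψ => UFree φ ∧ UFree ψ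
  | .next φ => UFree φ
  | .fut φ => UFree φ
  | .glob φ => UFree φ
  | .freq _ _ _ φ => UFree φ
  | .untl _ _ => False
  | _ => True

/-- The fragment fLTL∖GU: no `U` inside the scope of `G` or `G^{⋈p}_ext`. -/
def InFrag {Ap : Type} : FLTL Ap → Prop
  | .conj φ ψ => InFrag φ ∧ InFrag ψ
  | .disj φ ψ => InFrag φ ∧ InFrag ψ
  | .next φ => InFrag φ
  | .fut φ => InFrag φ
  | .untl φ ψ => InFrag φ ∧ InFrag ψ
  | .glob φ => UFree φ
  | .freq _ _ _ φ => UFree φ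
  | _ => True

/-- One-step unfolding `Unf`. -/
def unf {Ap : Type} : FLTL Ap → FLTL Ap
  | .conj φ ψ => .conj (unf φ) (unf ψ)
  | .disj φ ψ => .disj (unf φ) (unf ψ)
  | .fut φ => .disj (unf φ) (.next (.fut φ))
  | .glob φ => .conj (unf φ) (.next (.glob φ))
  | .untl φ ψ => .disj (unf ψ) (.conj (unf φ) (.next (.untl φ ψ)))
  | .freq e c p φ => .conj .tt (.next (.freq e c p φ))
  | φ => φ

/-- The next-step operator `ψ[ν]` for a letter `ν ⊆ Ap`. -/
def step {Ap : Type} : FLTL Ap → Set Ap → FLTL Ap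
  | .conj φ ψ, ν => .conj (step φ ν) (step ψ ν)
  | .disj φ ψ, ν => .disj (step φ ν) (step ψ ν)
  | .atom a, ν => if a ∈ ν then .tt else .ff
  | .natom a, ν => if a ∈ ν then .ff else .tt
  | .next φ, _ => φ
  | φ, _ => φ

/-- Non-Boolean formulas: those that are not conjunctions or disjunctions. -/
def nonBool {Ap : Type} : FLTL Ap → Prop
  | .conj _ _ => False
  | .disj _ _ => False
  | _ => True

/-- Extension of a propositional assignment (on non-Boolean formulas)
through conjunction and disjunction; `tt` and `ff` get their truth values. -/
def evalA {Ap : Type} (A : FLTL Ap → Prop) : FLTL Ap → Prop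
  | .tt => True
  | .ff => False
  | .conj φ ψ => evalA A φ ∧ evalA A ψ
  | .disj φ ψ => evalA A φ ∨ evalA A ψ
  | φ => A φ

/-- Propositional provability `Φ ⊢ ψ`. -/
def pproves {Ap : Type} (Φ : Set (FLTL Ap)) (ψ : FLTL Ap) : Prop :=
  ∀ A : FLTL Ap → Prop, (∀ χ ∈ Φ, evalA A χ) → evalA A ψ

/-- Propositional equivalence `≡_P`. -/
def pequiv {Ap : Type} (φ ψ : FLTL Ap) : Prop :=
  pproves {φ} ψ ∧ pproves {ψ} φ

/-- The set of subformulas of a formula (including itself). -/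
def subf {Ap : Type} : FLTL Ap → Set (FLTL Ap)
  | .conj φ ψ => insert (.conj φ ψ) (subf φ ∪ subf ψ)
  | .disj φ ψ => insert (.disj φ ψ) (subf φ ∪ subf ψ)
  | .next φ => insert (.next φ) (subf φ)
  | .fut φ => insert (.fut φ) (subf φ)
  | .glob φ => insert (.glob φ) (subf φ)
  | .untl φ ψ => insert (.untl φ ψ) (subf φ ∪ subf ψ)
  | .freq e c p φ => insert (.freq e c p φ) (subf φ)
  | φ => {φ}

/-- `sf(φ)`: the set of non-Boolean subformulas of `φ`. -/
def sfSet {Ap : Type} (φ : FLTL Ap) : Set (FLTL Ap) := {ψ ∈ subf φ | nonBool ψ}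

/-- Formulas of the shapes `Fξ`, `Gξ`, `G^{⋈p}_ext ξ`. -/
def isRecShape {Ap : Type} : FLTL Ap → Prop
  | .fut _ => True
  | .glob _ => True
  | .freq _ _ _ _ => True
  | _ => False

/-- `Rec`: the set of `F`-, `G`-, and `G^{⋈p}_ext`-subformulas of `φ`. -/
def RecSet {Ap : Type} (φ : FLTL Ap) : Set (FLTL Ap) := {ψ ∈ subf φ | isRecShape ψ}

/-- The defining condition of membership in `R(w)`. -/
def RsatCond {Ap : Type} (w : Word Ap) : FLTL Ap → Prop
  | .fut ξ => Sat (.glob (.fut ξ)) w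
  | .glob ξ => Sat (.fut (.glob ξ)) w
  | .freq e c p ξ => Sat (.freq e c p ξ) w
  | _ => False

/-- `R(w)`: elements of `Rec` eventually always satisfied on `w`. -/
def Rsat {Ap : Type} (φ : FLTL Ap) (w : Word Ap) : Set (FLTL Ap) :=
  {ψ ∈ RecSet φ | RsatCond w ψ}

/-- The threshold `T(w)`: the smallest `T` such that for all `t ≥ T` every
formula of `R(w)` holds at `w^t` and every formula of `Rec ∖ R(w)` fails at `w^t`. -/
def threshold {Ap : Type} (φ : FLTL Ap) (w : Word Ap) : ℕ :=
  sInf {T : ℕ | ∀ t, T ≤ t →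
    (∀ ψ ∈ Rsat φ w, Sat ψ (suffixW w t)) ∧
    (∀ ψ ∈ RecSet φ, ψ ∉ Rsat φ w → ¬ Sat ψ (suffixW w t))}

/-- Sinks of slave transition systems: `ψ[ν] = ψ` for every letter `ν`. -/
def isSink {Ap : Type} (ψ : FLTL Ap) : Prop := ∀ ν : Set Ap, step ψ ν = ψ

/-- Run of the slave LTS `S(ξ)` on a finite word: undefined (`none`) as soon as
a transition from a sink would be needed. -/
def slaveRunList {Ap : Type} : FLTL Ap → List (Set Ap) → Option (FLTL Ap)
  | ψ, [] => some ψ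
  | ψ, ν :: rest => if isSink ψ then none else slaveRunList (step ψ ν) rest

/-- The finite word `w[i] w[i+1] ⋯ w[i+len-1]`. -/
def segWord {Ap : Type} (w : Word Ap) (i len : ℕ) : List (Set Ap) :=
  (List.range len).map (fun k => w (i + k))

/-- `S(ξ)(w[i..j])`: the state of the slave LTS after reading `w[i]⋯w[j]`. -/
def readSeg {Ap : Type} (ξ : FLTL Ap) (w : Word Ap) (i j : ℕ) : Option (FLTL Ap) :=
  slaveRunList ξ (segWord w i (j + 1 - i))

/-- The state, at time `n`, of the slave token born at time `b`
(having read `w[b]⋯w[n-1]`). -/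
def tokState {Ap : Type} (ξ : FLTL Ap) (w : Word Ap) (b n : ℕ) : Option (FLTL Ap) :=
  slaveRunList ξ (segWord w b (n - b))

/-- `Sat(R)`: positions from which the slave run reaches an `R`-provable state. -/
def SatSet {Ap : Type} (R : Set (FLTL Ap)) (ξ : FLTL Ap) (w : Word Ap) : Set ℕ :=
  {i | ∃ j ≥ i, ∃ ψ, readSeg ξ w i j = some ψ ∧ pproves R ψ}

/-- The token (subset-construction) run of the slave automata for `ξ` on `w`:
at each step all non-sink tokens move and a fresh token is put on `ξ`. -/
def tokenSet {Ap : Type} (ξ : FLTL Ap) (w : Word Ap) : ℕ → Set (FLTL Ap)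
  | 0 => {ξ}
  | n + 1 => insert ξ ((fun ψ => step ψ (w n)) '' {ψ ∈ tokenSet ξ w n | ¬ isSink ψ})

/-- Acceptance of the Büchi slave automaton `S_GF(ξ,R)`:
infinitely often some token lies in an accepting (R-provable) sink. -/
def buchiAcc {Ap : Type} (R : Set (FLTL Ap)) (ξ : FLTL Ap) (w : Word Ap) : Prop :=
  ∃ᶠ n in atTop, ∃ ψ ∈ tokenSet ξ w n, isSink ψ ∧ pproves R ψ

/-- Acceptance of the co-Büchi slave automaton `S_FG(ξ,R)`:
only finitely often some token lies in a rejecting (non-R-provable) sink. -/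
def coBuchiAcc {Ap : Type} (R : Set (FLTL Ap)) (ξ : FLTL Ap) (w : Word Ap) : Prop :=
  ∀ᶠ n in atTop, ¬ ∃ ψ ∈ tokenSet ξ w n, isSink ψ ∧ ¬ pproves R ψ

/-- The counting function (state of the mean-payoff slave automaton) at time `n`:
the number of tokens currently in state `ψ`. -/
def tokenCount {Ap : Type} (ξ : FLTL Ap) (w : Word Ap) (n : ℕ) (ψ : FLTL Ap) : ℕ :=
  ((Finset.range (n + 1)).filter (fun b => tokState ξ w b n = some ψ)).card

/-- The reward `r(R)` of a counting state: total number of tokens in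
accepting (R-provable) sinks. -/
def mpRewardFn {Ap : Type} (R : Set (FLTL Ap)) (f : FLTL Ap → ℕ) : ℝ :=
  ∑' ψ : {χ : FLTL Ap // isSink χ ∧ pproves R χ}, (f ψ.1 : ℝ)

/-- Acceptance of the mean-payoff slave automaton `S_{G^{⋈p}_ext}(ξ,R)`. -/
def mpAcc {Ap : Type} (R : Set (FLTL Ap)) (ξ : FLTL Ap) (w : Word Ap)
    (e : Ext) (c : Cmp) (p : ℚ) : Prop :=
  c.rel (lr e (fun n => mpRewardFn R (tokenCount ξ w n))) (p : ℝ)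

/-- Acceptance of the slave automaton for a formula of `Rec`, with assumptions `R`. -/
def slaveAccept {Ap : Type} (R : Set (FLTL Ap)) (w : Word Ap) : FLTL Ap → Prop
  | .fut ξ => buchiAcc R ξ w
  | .glob ξ => coBuchiAcc R ξ w
  | .freq e c p ξ => mpAcc R ξ w e c p
  | _ => True

/-- `w ∈ L(P(R))`: the product of the slaves accepts `w` with the condition
`Acc(R) = ⋀_{ξ ∈ R} Acc_ξ(R)`. -/
def productAccept {Ap : Type} (R : Set (FLTL Ap)) (w : Word Ap) : Prop :=
  ∀ ψ ∈ R, slaveAccept R w ψ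

/-- The run of the master transition system on `w`. -/
def masterRun {Ap : Type} (φ : FLTL Ap) (w : Word Ap) : ℕ → FLTL Ap
  | 0 => φ
  | n + 1 => step (unf (masterRun φ w n)) (w n)

/-- The propositional substitution `χ[X/ff]`: replace each non-Boolean
formula belonging to `X` by `ff`. -/
def substFF {Ap : Type} (X : Set (FLTL Ap)) : FLTL Ap → FLTL Ap
  | .conj φ ψ => .conj (substFF X φ) (substFF X ψ)
  | .disj φ ψ => .disj (substFF X φ) (substFF X ψ)
  | φ => if φ ∈ X then .ff else φ

/-- The master acceptance condition `Acc_M(R)`: eventually, the current master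
formula is provable from `R` together with all tokens of the slaves of
`G`-formulas of `R`, with `Rec ∖ R` substituted by `ff`. -/
def masterAcc {Ap : Type} (φ : FLTL Ap) (R : Set (FLTL Ap)) (w : Word Ap) : Prop :=
  ∀ᶠ n in atTop,
    pproves
      (R ∪ ⋃ (ξ : FLTL Ap) (_ : FLTL.glob ξ ∈ R),
        substFF (RecSet φ \ R) '' tokenSet ξ w n)
      (masterRun φ w n)

/-- `w ∈ L(A)` for the final automaton `A` (master × slave product) of `φ`. -/
def finalAccept {Ap : Type} (φ : FLTL Ap) (w : Word Ap) : Prop :=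
  ∃ R ⊆ RecSet φ, masterAcc φ R w ∧ productAccept R w

/-!
Fix `R ⊆ Rec` witnessing acceptance. A token of the slave for `ξ` that is born at a late time `b`
and reaches an `R`-provable state certifies `ξ` at `b`: provability from `R` gives the truth of
the pessimistic reading (temporal formulas outside `R` replaced by `ff`) at that later time, and
this truth travels back along the slave run because, from some time on, the finitely many
formulas of `R` no longer change their truth value. By induction on subformulas this certifies
every `σ ∈ R` on `w`: Büchi, co-Büchi and mean-payoff acceptance of the slaves give `GFξ`, `FGξ`
and the frequency bound (a token reaches its sink exactly `sinkDepth ξ` steps after birth, so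
each birth time is rewarded at most once). Finally, at a late time the master state is provable
from `R` and the pessimistic readings of the tokens of the `G`-slaves, all of which hold, and
the master run preserves truth.
-/

section Cesaro

open Finset Function

def Ext.lim : Ext → (ℕ → ℝ) → ℝ
  | .inf, f => liminf f atTop
  | .sup, f => limsup f atTop

lemma lr_eq_lim (e : Ext) (q : ℕ → ℝ) : lr e q = e.lim (cesaro q) := by
  cases e <;> rfl

lemma Ext.lim_comp_add_one (e : Ext) (f : ℕ → ℝ) : e.lim (fun n => f (n + 1)) = e.lim f := by
  cases e
  · exact liminf_nat_add f 1
  · exact limsup_nat_add f 1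

lemma Ext.lim_le_lim_of_le_add {f g ε : ℕ → ℝ} (e : Ext)
    (hf : IsBoundedUnder (· ≥ ·) atTop f) (hg : IsBoundedUnder (· ≤ ·) atTop g)
    (hg' : IsBoundedUnder (· ≥ ·) atTop g) (hε : Tendsto ε atTop (nhds 0))
    (hfg : ∀ᶠ n in atTop, f n ≤ g n + ε n) : e.lim f ≤ e.lim g := by
  have hεu : IsBoundedUnder (· ≤ ·) atTop ε := hε.isBoundedUnder_le
  have hεl : IsBoundedUnder (· ≥ ·) atTop ε := hε.isBoundedUnder_ge
  cases e
  · calc liminf f atTop ≤ liminf (ε + g) atTop := by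
          refine liminf_le_liminf (hfg.mono fun n h => by simpa [add_comm] using h) hf ?_
          exact (isBoundedUnder_le_add hεu hg).isCoboundedUnder_ge
      _ ≤ limsup ε atTop + liminf g atTop :=
          liminf_add_le hεl hεu hg' hg.isCoboundedUnder_ge
      _ = liminf g atTop := by rw [hε.limsup_eq, zero_add]
  · calc limsup f atTop ≤ limsup (g + ε) atTop :=
          limsup_le_limsup hfg hf.isCoboundedUnder_le (isBoundedUnder_le_add hg hεu)
      _ ≤ limsup g atTop + limsup ε atTop :=
          limsup_add_le hg' hg hεl.isCoboundedUnder_le hεu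
      _ = limsup g atTop := by rw [hε.limsup_eq, add_zero]

lemma cesaro_nonneg {q : ℕ → ℝ} (hq : ∀ i, 0 ≤ q i) (n : ℕ) : 0 ≤ cesaro q n :=
  div_nonneg (Finset.sum_nonneg fun i _ => hq i) n.cast_nonneg

lemma cesaro_le {q : ℕ → ℝ} {B : ℝ} (hB : 0 ≤ B) (hq : ∀ i, q i ≤ B) (n : ℕ) :
    cesaro q n ≤ B := by
  unfold cesaro
  rcases Nat.eq_zero_or_pos n with rfl | hn
  · simpa using hB
  · rw [div_le_iff₀ (by positivity)]
    calc ∑ j ∈ Finset.range n, q j ≤ ∑ _j ∈ Finset.range n, B := Finset.sum_le_sum fun i _ => hq i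
      _ = B * n := by simp [mul_comm]

lemma cesaro_comp_add_one {q : ℕ → ℝ} {n : ℕ} (hn : n ≠ 0) :
    cesaro (fun i => q (i + 1)) n = cesaro q (n + 1) + (cesaro q (n + 1) - q 0) / n := by
  have hn' : (n : ℝ) ≠ 0 := Nat.cast_ne_zero.2 hn
  simp only [cesaro, Finset.sum_range_succ' q n]
  field_simp
  push_cast
  ring

lemma abs_cesaro_comp_add_one_sub_le {q : ℕ → ℝ} (hq0 : ∀ i, 0 ≤ q i) (hq1 : ∀ i, q i ≤ 1)
    {n : ℕ} (hn : n ≠ 0) : |cesaro (fun i => q (i + 1)) n - cesaro q (n + 1)| ≤ 1 / n := by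
  rw [cesaro_comp_add_one hn, add_sub_cancel_left, abs_div, Nat.abs_cast]
  gcongr
  rw [abs_le]
  constructor <;> linarith [cesaro_nonneg hq0 (n + 1), cesaro_le zero_le_one hq1 (n + 1),
    hq0 0, hq1 0]

lemma lr_comp_add_one {q : ℕ → ℝ} (hq0 : ∀ i, 0 ≤ q i) (hq1 : ∀ i, q i ≤ 1) (e : Ext) :
    lr e (fun i => q (i + 1)) = lr e q := by
  have hq'u : IsBoundedUnder (· ≤ ·) atTop (cesaro fun i => q (i + 1)) :=
    isBoundedUnder_of ⟨1, cesaro_le zero_le_one fun i => hq1 (i + 1)⟩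
  have hq'l : IsBoundedUnder (· ≥ ·) atTop (cesaro fun i => q (i + 1)) :=
    isBoundedUnder_of ⟨0, cesaro_nonneg fun i => hq0 (i + 1)⟩
  have hqu : IsBoundedUnder (· ≤ ·) atTop fun n => cesaro q (n + 1) :=
    isBoundedUnder_of ⟨1, fun n => cesaro_le zero_le_one hq1 (n + 1)⟩
  have hql : IsBoundedUnder (· ≥ ·) atTop fun n => cesaro q (n + 1) :=
    isBoundedUnder_of ⟨0, fun n => cesaro_nonneg hq0 (n + 1)⟩
  have hclose : ∀ᶠ n : ℕ in atTop, |cesaro (fun i => q (i + 1)) n - cesaro q (n + 1)| ≤ 1 / n :=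
    (eventually_ne_atTop 0).mono fun n hn => abs_cesaro_comp_add_one_sub_le hq0 hq1 hn
  have hε : Tendsto (fun n : ℕ => 1 / (n : ℝ)) atTop (nhds 0) :=
    tendsto_one_div_atTop_nhds_zero_nat
  rw [lr_eq_lim, lr_eq_lim, ← e.lim_comp_add_one (cesaro q)]
  refine le_antisymm (e.lim_le_lim_of_le_add hq'l hqu hql hε (hclose.mono fun n h => ?_))
    (e.lim_le_lim_of_le_add hql hq'u hq'l hε (hclose.mono fun n h => ?_))
  · linarith [(abs_le.1 h).2]
  · linarith [(abs_le.1 h).1]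

lemma Cmp.rel_of_le {c : Cmp} {x y p : ℝ} (h : c.rel x p) (hxy : x ≤ y) : c.rel y p := by
  cases c
  · exact le_trans h hxy
  · exact lt_of_lt_of_le h hxy

lemma sum_card_le_card_filter_add {D : ℕ → Finset ℕ} {P : ℕ → Prop} [DecidablePred P] {K : ℕ}
    (hdisj : Pairwise (Disjoint on D)) (hle : ∀ n, ∀ b ∈ D n, b ≤ n)
    (hP : ∀ n, ∀ b ∈ D n, K ≤ b → P b) (N : ℕ) :
    ∑ n ∈ range N, #(D n) ≤ #((range N).filter P) + K := by
  rw [← card_biUnion (hdisj.set_pairwise _)]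
  calc #((range N).biUnion D) ≤ #((range N).filter P ∪ range K) := by
        refine card_le_card fun b hb => ?_
        obtain ⟨n, hn, hb⟩ := mem_biUnion.1 hb
        have := hle n b hb
        by_cases hK : K ≤ b
        · exact mem_union_left _ (mem_filter.2 ⟨by simp at hn ⊢; omega, hP n b hb hK⟩)
        · exact mem_union_right _ (by simp; omega)
    _ ≤ #((range N).filter P) + K := by
        simpa using card_union_le ((range N).filter P) (range K)

end Cesaro

section Semantics

variable {Ap : Type}

@[simp] lemma suffixW_zero (w : Word Ap) : suffixW w 0 = w := by
  funext i; simp [suffixW]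

@[simp] lemma suffixW_suffixW (w : Word Ap) (a b : ℕ) :
    suffixW (suffixW w a) b = suffixW w (a + b) := by
  funext i; simp [suffixW, Nat.add_assoc]

@[simp] lemma suffixW_apply_zero (w : Word Ap) (k : ℕ) : suffixW w k 0 = w k := rfl

lemma sat_fut_iff_or (u : Word Ap) (φ : FLTL Ap) :
    Sat (.fut φ) u ↔ Sat φ u ∨ Sat (.fut φ) (suffixW u 1) := by
  simp only [Sat, suffixW_suffixW]
  constructor
  · rintro ⟨_ | k, hk⟩
    · exact .inl (by simpa using hk)
    · exact .inr ⟨k, by rwa [Nat.add_comm]⟩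
  · rintro (h | ⟨k, hk⟩)
    · exact ⟨0, by simpa using h⟩
    · exact ⟨k + 1, by rwa [Nat.add_comm] at hk⟩

lemma sat_glob_iff_and (u : Word Ap) (φ : FLTL Ap) :
    Sat (.glob φ) u ↔ Sat φ u ∧ Sat (.glob φ) (suffixW u 1) := by
  simp only [Sat, suffixW_suffixW]
  constructor
  · intro h
    exact ⟨by simpa using h 0, fun k => by rw [Nat.add_comm]; exact h (k + 1)⟩
  · rintro ⟨h0, h⟩ (_ | k)
    · simpa using h0
    · rw [Nat.add_comm]; exact h k

lemma sat_untl_iff (u : Word Ap) (φ ψ : FLTL Ap) :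
    Sat (.untl φ ψ) u ↔ Sat ψ u ∨ (Sat φ u ∧ Sat (.untl φ ψ) (suffixW u 1)) := by
  simp only [Sat, suffixW_suffixW]
  constructor
  · rintro ⟨_ | k, hk, hall⟩
    · exact .inl (by simpa using hk)
    · refine .inr ⟨by simpa using hall 0 k.succ_pos, k, by rwa [Nat.add_comm], fun j hj => ?_⟩
      rw [Nat.add_comm]; exact hall (j + 1) (by omega)
  · rintro (h | ⟨h0, k, hk, hall⟩)
    · exact ⟨0, by simpa using h, by simp⟩
    · refine ⟨k + 1, by rwa [Nat.add_comm] at hk, fun j hj => ?_⟩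
      rcases j with _ | j
      · simpa using h0
      · have := hall j (by omega); rwa [Nat.add_comm] at this

lemma sat_glob_fut_iff (w : Word Ap) (ξ : FLTL Ap) :
    Sat (.glob (.fut ξ)) w ↔ ∃ᶠ t in atTop, Sat ξ (suffixW w t) := by
  simp only [Sat, suffixW_suffixW, frequently_atTop]
  exact ⟨fun h m => let ⟨k, hk⟩ := h m; ⟨m + k, by omega, hk⟩,
    fun h m => let ⟨t, hmt, ht⟩ := h m; ⟨t - m, by rwa [Nat.add_sub_cancel' hmt]⟩⟩

lemma sat_fut_glob_iff (w : Word Ap) (ξ : FLTL Ap) :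
    Sat (.fut (.glob ξ)) w ↔ ∀ᶠ t in atTop, Sat ξ (suffixW w t) := by
  simp only [Sat, suffixW_suffixW, eventually_atTop]
  exact ⟨fun ⟨m, hm⟩ => ⟨m, fun t ht => by simpa [Nat.add_sub_cancel' ht] using hm (t - m)⟩,
    fun ⟨m, hm⟩ => ⟨m, fun k => hm (m + k) (by omega)⟩⟩

lemma ind_nonneg (P : Prop) : 0 ≤ ind P := by unfold ind; split_ifs <;> norm_num

lemma ind_le_one (P : Prop) : ind P ≤ 1 := by unfold ind; split_ifs <;> norm_num

lemma sat_freq_suffixW_one_iff (u : Word Ap) (e : Ext) (c : Cmp) (p : ℚ) (ξ : FLTL Ap) :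
    Sat (.freq e c p ξ) (suffixW u 1) ↔ Sat (.freq e c p ξ) u := by
  simp only [Sat, suffixW_suffixW, Nat.add_comm 1]
  rw [lr_comp_add_one (q := fun i => ind (Sat ξ (suffixW u i))) (fun _ => ind_nonneg _)
    (fun _ => ind_le_one _)]

lemma sat_freq_suffixW_iff (u : Word Ap) (e : Ext) (c : Cmp) (p : ℚ) (ξ : FLTL Ap) (t : ℕ) :
    Sat (.freq e c p ξ) (suffixW u t) ↔ Sat (.freq e c p ξ) u := by
  induction t with
  | zero => rw [suffixW_zero]
  | succ t ih => rw [← ih, ← sat_freq_suffixW_one_iff (suffixW u t), suffixW_suffixW]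

lemma sat_step_unf (u : Word Ap) (χ : FLTL Ap) :
    Sat (step (unf χ) (u 0)) (suffixW u 1) ↔ Sat χ u := by
  induction χ with
  | tt | ff => simp [unf, step, Sat]
  | atom a | natom a => by_cases h : a ∈ u 0 <;> simp [unf, step, Sat, h]
  | conj a b iha ihb | disj a b iha ihb => simp only [unf, step, Sat, iha, ihb]
  | next a => simp [unf, step, Sat]
  | fut a iha => exact (or_congr_left iha).trans (sat_fut_iff_or u a).symm
  | glob a iha => exact (and_congr_left' iha).trans (sat_glob_iff_and u a).symm
  | untl a b iha ihb => exact (or_congr ihb (and_congr_left' iha)).trans (sat_untl_iff u a b).symm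
  | freq e c p a => exact (iff_of_eq (true_and _)).trans (sat_freq_suffixW_one_iff u e c p a)

lemma sat_masterRun_iff (φ : FLTL Ap) (w : Word Ap) (n : ℕ) :
    Sat (masterRun φ w n) (suffixW w n) ↔ Sat φ w := by
  induction n with
  | zero => simp [masterRun]
  | succ n ih =>
    rw [← ih, masterRun, ← sat_step_unf (suffixW w n), suffixW_apply_zero, suffixW_suffixW]

lemma sat_glob_suffixW {ξ : FLTL Ap} {u : Word Ap} (h : Sat (.glob ξ) u) (k : ℕ) :
    Sat (.glob ξ) (suffixW u k) := fun j => by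
  rw [suffixW_suffixW]; exact h (k + j)

lemma eventually_sat_of_sat_succ (w : Word Ap) {σ : FLTL Ap} (hσ : isRecShape σ) :
    ∀ᶠ t in atTop, Sat σ (suffixW w (t + 1)) → Sat σ (suffixW w t) := by
  cases σ with
  | fut ξ => exact .of_forall fun t h => (sat_fut_iff_or _ ξ).2 (.inr (by simpa using h))
  | glob ξ =>
    by_cases hG : ∃ t₀, Sat (.glob ξ) (suffixW w t₀)
    · obtain ⟨t₀, ht₀⟩ := hG
      filter_upwards [eventually_ge_atTop t₀] with t ht _
      simpa [Nat.add_sub_cancel' ht] using sat_glob_suffixW ht₀ (t - t₀)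
    · exact .of_forall fun t h => (hG ⟨t + 1, h⟩).elim
  | freq e c p ξ =>
    exact .of_forall fun t h => by rwa [sat_freq_suffixW_iff] at h ⊢
  | _ => exact hσ.elim

lemma RsatCond.eventually_sat {w : Word Ap} {σ : FLTL Ap} (h : RsatCond w σ) :
    ∀ᶠ t in atTop, Sat σ (suffixW w t) := by
  cases σ with
  | fut ξ => exact .of_forall h
  | glob ξ =>
    obtain ⟨t₀, ht₀⟩ := h
    filter_upwards [eventually_ge_atTop t₀] with t ht
    simpa [Nat.add_sub_cancel' ht] using sat_glob_suffixW ht₀ (t - t₀)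
  | freq e c p ξ => exact .of_forall fun t => (sat_freq_suffixW_iff w e c p ξ t).2 h
  | _ => exact h.elim

end Semantics

section Formulas

variable {Ap : Type}

lemma evalA_sat_iff (u : Word Ap) (ψ : FLTL Ap) : evalA (fun χ => Sat χ u) ψ ↔ Sat ψ u := by
  induction ψ with
  | conj a b iha ihb | disj a b iha ihb => simp [evalA, Sat, iha, ihb]
  | tt | ff => simp [evalA, Sat]
  | _ => simp [evalA]

lemma pproves.sat {Φ : Set (FLTL Ap)} {ψ : FLTL Ap} {u : Word Ap} (h : pproves Φ ψ)
    (hΦ : ∀ χ ∈ Φ, Sat χ u) : Sat ψ u :=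
  (evalA_sat_iff u ψ).1 (h _ fun χ hχ => (evalA_sat_iff u χ).2 (hΦ χ hχ))

lemma evalA_of_isRecShape (A : FLTL Ap → Prop) {σ : FLTL Ap} (h : isRecShape σ) :
    evalA A σ = A σ := by
  cases σ <;> simp_all [evalA, isRecShape]

def isTemporal : FLTL Ap → Prop
  | .fut _ | .glob _ | .untl _ _ | .freq _ _ _ _ => True
  | _ => False

/-- The temporal formulas read as `ff` by the pessimistic reading `substFF (unassumed R) χ`.
Besides `Rec ∖ R` this contains every `U`-formula: unlike the formulas of `R` from some time on,
its truth does not propagate backwards along a slave run. -/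
def unassumed (R : Set (FLTL Ap)) : Set (FLTL Ap) := {ρ | isTemporal ρ ∧ ρ ∉ R}

lemma sat_substFF_mono {X Y : Set (FLTL Ap)} (hXY : X ⊆ Y) {u : Word Ap} {χ : FLTL Ap}
    (h : Sat (substFF Y χ) u) : Sat (substFF X χ) u := by
  induction χ with
  | conj a b iha ihb => exact ⟨iha h.1, ihb h.2⟩
  | disj a b iha ihb => exact h.imp iha ihb
  | _ =>
    simp only [substFF] at h ⊢
    split_ifs at h ⊢ with hX hY
    exacts [h, absurd (hXY hX) hY, h.elim, h]

lemma sat_of_sat_substFF {X : Set (FLTL Ap)} {u : Word Ap} {χ : FLTL Ap}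
    (h : Sat (substFF X χ) u) : Sat χ u := by
  induction χ with
  | conj a b iha ihb => exact ⟨iha h.1, ihb h.2⟩
  | disj a b iha ihb => exact h.imp iha ihb
  | _ =>
    simp only [substFF] at h
    split_ifs at h
    · exact h.elim
    · exact h

lemma RecSet_diff_subset_unassumed (φ : FLTL Ap) (R : Set (FLTL Ap)) :
    RecSet φ \ R ⊆ unassumed R := by
  rintro ρ ⟨⟨-, hrec⟩, hR⟩
  exact ⟨by cases ρ <;> simp_all [isRecShape, isTemporal], hR⟩

lemma mem_subf_self (χ : FLTL Ap) : χ ∈ subf χ := by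
  cases χ <;> simp [subf]

lemma subf_finite (χ : FLTL Ap) : (subf χ).Finite := by
  induction χ with
  | conj a b iha ihb | disj a b iha ihb | untl a b iha ihb => exact (iha.union ihb).insert _
  | next a iha | fut a iha | glob a iha | freq e c p a iha => exact iha.insert _
  | _ => exact Set.finite_singleton _

lemma RecSet_finite (φ : FLTL Ap) : (RecSet φ).Finite :=
  (subf_finite φ).subset fun _ h => h.1

lemma mem_subf_of_mem_subf_step {ρ : FLTL Ap} (hρ : isRecShape ρ) {χ : FLTL Ap} {ν : Set Ap}
    (h : ρ ∈ subf (step χ ν)) : ρ ∈ subf χ := by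
  induction χ with
  | conj a b iha ihb | disj a b iha ihb =>
    simp only [step, subf, Set.mem_insert_iff, Set.mem_union] at h ⊢
    rcases h with rfl | h | h
    · exact hρ.elim
    · exact .inr (.inl (iha h))
    · exact .inr (.inr (ihb h))
  | atom a | natom a =>
    simp only [step] at h
    split_ifs at h <;> simp only [subf, Set.mem_singleton_iff] at h <;> subst h <;> exact hρ.elim
  | next a => exact Set.mem_insert_of_mem _ h
  | _ => exact h

end Formulas

section Slaves

variable {Ap : Type}

def sinkDepth : FLTL Ap → ℕ
  | .conj a b | .disj a b => max (sinkDepth a) (sinkDepth b)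
  | .atom _ | .natom _ => 1
  | .next a => sinkDepth a + 1
  | _ => 0

lemma sinkDepth_step (χ : FLTL Ap) (ν : Set Ap) : sinkDepth (step χ ν) = sinkDepth χ - 1 := by
  induction χ with
  | conj a b iha ihb | disj a b iha ihb => simp only [step, sinkDepth, iha, ihb]; omega
  | atom a | natom a => simp only [step]; split_ifs <;> simp [sinkDepth]
  | _ => simp [step, sinkDepth]

lemma isSink_iff_sinkDepth_eq_zero (χ : FLTL Ap) : isSink χ ↔ sinkDepth χ = 0 := by
  refine ⟨fun h => by have := sinkDepth_step χ ∅; rw [h ∅] at this; omega, fun h ν => ?_⟩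
  induction χ with
  | conj a b iha ihb | disj a b iha ihb =>
    simp only [sinkDepth, Nat.max_eq_zero_iff] at h
    simp only [step, iha h.1, ihb h.2]
  | atom a | natom a | next a => simp [sinkDepth] at h
  | _ => rfl

def runFrom (w : Word Ap) (χ : FLTL Ap) (m : ℕ) : ℕ → FLTL Ap
  | 0 => χ
  | k + 1 => step (runFrom w χ m k) (w (m + k))

lemma sinkDepth_runFrom (w : Word Ap) (χ : FLTL Ap) (m k : ℕ) :
    sinkDepth (runFrom w χ m k) = sinkDepth χ - k := by
  induction k with
  | zero => rfl
  | succ k ih => simp only [runFrom, sinkDepth_step, ih]; omega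

lemma isSink_runFrom_iff (w : Word Ap) (χ : FLTL Ap) (m k : ℕ) :
    isSink (runFrom w χ m k) ↔ sinkDepth χ ≤ k := by
  rw [isSink_iff_sinkDepth_eq_zero, sinkDepth_runFrom]; omega

lemma self_mem_tokenSet (ξ : FLTL Ap) (w : Word Ap) (n : ℕ) : ξ ∈ tokenSet ξ w n := by
  cases n <;> simp [tokenSet]

lemma runFrom_mem_tokenSet {ξ χ : FLTL Ap} {w : Word Ap} {n k : ℕ}
    (hχ : χ ∈ tokenSet ξ w n) (hk : k ≤ sinkDepth χ) : runFrom w χ n k ∈ tokenSet ξ w (n + k) := by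
  induction k with
  | zero => exact hχ
  | succ k ih =>
    refine Set.mem_insert_of_mem _ ⟨_, ⟨ih (by omega), ?_⟩, rfl⟩
    rw [isSink_runFrom_iff]; omega

lemma mem_tokenSet_iff {ξ ψ : FLTL Ap} {w : Word Ap} {n : ℕ} :
    ψ ∈ tokenSet ξ w n ↔ ∃ b ≤ n, n - b ≤ sinkDepth ξ ∧ ψ = runFrom w ξ b (n - b) := by
  refine ⟨fun hψ => ?_, fun ⟨b, hb, hdepth, hψ⟩ => ?_⟩
  · induction n generalizing ψ with
    | zero => exact ⟨0, le_rfl, by simp, by simpa [tokenSet, runFrom] using hψ⟩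
    | succ n ih =>
      rcases hψ with rfl | ⟨χ, ⟨hχ, hsink⟩, rfl⟩
      · exact ⟨n + 1, le_rfl, by simp, by simp [runFrom]⟩
      obtain ⟨b, hb, -, rfl⟩ := ih hχ
      rw [isSink_runFrom_iff, not_le] at hsink
      refine ⟨b, by omega, by omega, ?_⟩
      rw [show n + 1 - b = n - b + 1 by omega, runFrom, Nat.add_sub_cancel' hb]
  · have := runFrom_mem_tokenSet (self_mem_tokenSet ξ w b) hdepth
    rwa [Nat.add_sub_cancel' hb, ← hψ] at this

lemma slaveRunList_append_singleton (l : List (Set Ap)) (χ : FLTL Ap) (ν : Set Ap) :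
    slaveRunList χ (l ++ [ν]) =
      (slaveRunList χ l).bind fun ρ => if isSink ρ then none else some (step ρ ν) := by
  induction l generalizing χ with
  | nil => simp [slaveRunList]
  | cons μ rest ih =>
    simp only [List.cons_append, slaveRunList]
    split_ifs
    · rfl
    · exact ih _

lemma slaveRunList_segWord (w : Word Ap) (χ : FLTL Ap) (m k : ℕ) :
    slaveRunList χ (segWord w m k) =
      if k ≤ sinkDepth χ then some (runFrom w χ m k) else none := by
  induction k with
  | zero => simp [segWord, slaveRunList, runFrom]
  | succ k ih =>
    have hseg : segWord w m (k + 1) = segWord w m k ++ [w (m + k)] := by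
      simp [segWord, List.range_succ]
    rw [hseg, slaveRunList_append_singleton, ih]
    by_cases hk : k + 1 ≤ sinkDepth χ
    · have hsink : ¬ isSink (runFrom w χ m k) := by rw [isSink_runFrom_iff]; omega
      simp [hk, hsink, show k ≤ sinkDepth χ by omega, runFrom]
    · by_cases hk' : k ≤ sinkDepth χ
      · have hsink : isSink (runFrom w χ m k) := by rw [isSink_runFrom_iff]; omega
        simp [hk, hk', hsink]
      · simp [hk, hk']

lemma tokState_eq_some_iff {ξ ψ : FLTL Ap} {w : Word Ap} {b n : ℕ} :
    tokState ξ w b n = some ψ ↔ n - b ≤ sinkDepth ξ ∧ ψ = runFrom w ξ b (n - b) := by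
  rw [tokState, slaveRunList_segWord]
  split_ifs with h <;> simp [h, eq_comm]

lemma mem_subf_of_mem_subf_runFrom {ρ : FLTL Ap} (hρ : isRecShape ρ) {w : Word Ap}
    {χ : FLTL Ap} {m k : ℕ} (h : ρ ∈ subf (runFrom w χ m k)) : ρ ∈ subf χ := by
  induction k with
  | zero => exact h
  | succ k ih => exact ih (mem_subf_of_mem_subf_step hρ h)

lemma mem_subf_of_mem_tokenSet {ρ : FLTL Ap} (hρ : isRecShape ρ) {ξ χ : FLTL Ap}
    {w : Word Ap} {n : ℕ} (hχ : χ ∈ tokenSet ξ w n) (h : ρ ∈ subf χ) : ρ ∈ subf ξ := by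
  obtain ⟨b, -, -, rfl⟩ := mem_tokenSet_iff.1 hχ
  exact mem_subf_of_mem_subf_runFrom hρ h

end Slaves

section Pessimism

variable {Ap : Type} {R : Set (FLTL Ap)}

lemma sat_substFF_of_sat_substFF_step {u : Word Ap}
    (hR : ∀ ρ ∈ R, Sat ρ (suffixW u 1) → Sat ρ u) (χ : FLTL Ap)
    (h : Sat (substFF (unassumed R) (step χ (u 0))) (suffixW u 1)) :
    Sat (substFF (unassumed R) χ) u := by
  induction χ with
  | conj a b iha ihb => exact ⟨iha h.1, ihb h.2⟩
  | disj a b iha ihb => exact h.imp iha ihb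
  | tt | ff => simp_all [step, substFF, unassumed, isTemporal, Sat]
  | atom a | natom a =>
    by_cases ha : a ∈ u 0 <;> simp_all [step, substFF, unassumed, isTemporal, Sat]
  | next a =>
    simp only [step, substFF, unassumed, isTemporal] at h ⊢
    simpa [Sat] using sat_of_sat_substFF h
  | fut a | glob a | untl a b | freq e c p a =>
    simp only [step, substFF, unassumed, isTemporal, true_and, Set.mem_ofPred_eq] at h ⊢
    split_ifs at h ⊢ with hR'
    · exact hR _ hR' h
    · exact h

lemma sat_substFF_of_sat_substFF_runFrom {w : Word Ap} {m : ℕ}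
    (hR : ∀ t ≥ m, ∀ ρ ∈ R, Sat ρ (suffixW w (t + 1)) → Sat ρ (suffixW w t))
    (χ : FLTL Ap) (k : ℕ) (h : Sat (substFF (unassumed R) (runFrom w χ m k)) (suffixW w (m + k))) :
    Sat (substFF (unassumed R) χ) (suffixW w m) := by
  induction k with
  | zero => exact h
  | succ k ih =>
    refine ih (sat_substFF_of_sat_substFF_step (u := suffixW w (m + k)) ?_ _ ?_)
    · simpa using hR (m + k) (by omega)
    · simpa [← Nat.add_assoc, runFrom] using h

lemma sat_substFF_of_evalA {X : Set (FLTL Ap)} (hX : FLTL.tt ∉ X) {A : FLTL Ap → Prop}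
    {u : Word Ap} (ψ : FLTL Ap) (hA : ∀ ρ ∈ subf ψ, A ρ → Sat (substFF X ρ) u)
    (h : evalA A ψ) : Sat (substFF X ψ) u := by
  induction ψ with
  | conj a b iha ihb =>
    exact ⟨iha (fun ρ hρ => hA ρ (.inr (.inl hρ))) h.1, ihb (fun ρ hρ => hA ρ (.inr (.inr hρ))) h.2⟩
  | disj a b iha ihb =>
    exact h.imp (iha fun ρ hρ => hA ρ (.inr (.inl hρ))) (ihb fun ρ hρ => hA ρ (.inr (.inr hρ)))
  | tt => simp [substFF, hX, Sat]
  | ff => exact h.elim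
  | _ => exact hA _ (mem_subf_self _) h

lemma sat_substFF_of_pproves (hRrec : ∀ ρ ∈ R, isRecShape ρ) {u : Word Ap} {ψ : FLTL Ap}
    (hsat : ∀ ρ ∈ R, ρ ∈ subf ψ → Sat ρ u) (hp : pproves R ψ) :
    Sat (substFF (unassumed R) ψ) u := by
  let A (ρ : FLTL Ap) : Prop := ρ ∈ subf ψ → Sat (substFF (unassumed R) ρ) u
  have hA : ∀ ρ ∈ R, evalA A ρ := fun ρ hρR => by
    have hshape := hRrec ρ hρR
    have hρX : ρ ∉ unassumed R := fun h => h.2 hρR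
    rw [evalA_of_isRecShape _ hshape]
    intro hρ
    cases ρ <;> simp_all [substFF, isRecShape]
  exact sat_substFF_of_evalA (by simp [unassumed, isTemporal]) ψ (fun ρ hρ h => h hρ) (hp A hA)

lemma sat_substFF_of_pproves_runFrom (hRrec : ∀ ρ ∈ R, isRecShape ρ) {w : Word Ap}
    {χ : FLTL Ap} {m k : ℕ}
    (hstab : ∀ t ≥ m, ∀ ρ ∈ R, Sat ρ (suffixW w (t + 1)) → Sat ρ (suffixW w t))
    (hsat : ∀ ρ ∈ R, ρ ∈ subf χ → Sat ρ (suffixW w (m + k)))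
    (hp : pproves R (runFrom w χ m k)) : Sat (substFF (unassumed R) χ) (suffixW w m) :=
  sat_substFF_of_sat_substFF_runFrom hstab χ k <| sat_substFF_of_pproves hRrec
    (fun ρ hρR hρ => hsat ρ hρR (mem_subf_of_mem_subf_runFrom (hRrec ρ hρR) hρ)) hp

end Pessimism

section SlaveAcceptance

open Finset

variable {Ap : Type} {R : Set (FLTL Ap)} {ξ : FLTL Ap} {w : Word Ap}

lemma eventually_sat_substFF_of_pproves_runFrom (hRfin : R.Finite)
    (hRrec : ∀ ρ ∈ R, isRecShape ρ)
    (hsub : ∀ ρ ∈ R, ρ ∈ subf ξ → ∀ᶠ t in atTop, Sat ρ (suffixW w t)) :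
    ∀ᶠ n in atTop, ∀ χ ∈ tokenSet ξ w n, ∀ k, pproves R (runFrom w χ n k) →
      Sat (substFF (unassumed R) χ) (suffixW w n) := by
  obtain ⟨T, hT⟩ := eventually_atTop.1 <|
    hRfin.eventually_all.2 fun ρ hρ => eventually_sat_of_sat_succ w (hRrec ρ hρ)
  obtain ⟨T', hT'⟩ := eventually_atTop.1 <|
    (hRfin.subset Set.inter_subset_left : (R ∩ subf ξ).Finite).eventually_all.2
      fun ρ hρ => hsub ρ hρ.1 hρ.2
  filter_upwards [eventually_ge_atTop (max T T')] with n hn χ hχ k hp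
  refine sat_substFF_of_pproves_runFrom hRrec (fun t ht => hT t (by omega)) (fun ρ hρR hρ => ?_) hp
  exact hT' (n + k) (by omega) ρ ⟨hρR, mem_subf_of_mem_tokenSet (hRrec ρ hρR) hχ hρ⟩

lemma coBuchiAcc.eventually_pproves_runFrom (h : coBuchiAcc R ξ w) :
    ∀ᶠ n in atTop, ∀ χ ∈ tokenSet ξ w n, pproves R (runFrom w χ n (sinkDepth χ)) := by
  obtain ⟨N, hN⟩ := eventually_atTop.1 h
  filter_upwards [eventually_ge_atTop N] with n hn χ hχ
  by_contra hp
  exact hN (n + sinkDepth χ) (by omega)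
    ⟨_, runFrom_mem_tokenSet hχ le_rfl, (isSink_runFrom_iff ..).2 le_rfl, hp⟩

lemma coBuchiAcc.eventually_sat_substFF (hRfin : R.Finite) (hRrec : ∀ ρ ∈ R, isRecShape ρ)
    (hsub : ∀ ρ ∈ R, ρ ∈ subf ξ → ∀ᶠ t in atTop, Sat ρ (suffixW w t)) (h : coBuchiAcc R ξ w) :
    ∀ᶠ n in atTop, ∀ χ ∈ tokenSet ξ w n, Sat (substFF (unassumed R) χ) (suffixW w n) := by
  filter_upwards [eventually_sat_substFF_of_pproves_runFrom hRfin hRrec hsub,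
    h.eventually_pproves_runFrom] with n hsat hp χ hχ
  exact hsat χ hχ _ (hp χ hχ)

lemma sat_glob_fut_of_buchiAcc
    (hcert : ∀ᶠ b in atTop, ∀ k, pproves R (runFrom w ξ b k) → Sat ξ (suffixW w b))
    (h : buchiAcc R ξ w) : Sat (.glob (.fut ξ)) w := by
  obtain ⟨K, hK⟩ := eventually_atTop.1 hcert
  rw [sat_glob_fut_iff, frequently_atTop]
  intro m
  obtain ⟨n, hn, ψ, hψ, -, hp⟩ := frequently_atTop.1 h (max K m + sinkDepth ξ)
  obtain ⟨b, -, hdepth, rfl⟩ := mem_tokenSet_iff.1 hψ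
  exact ⟨b, by omega, hK b (by omega) _ hp⟩

lemma sat_fut_glob_of_coBuchiAcc
    (hcert : ∀ᶠ b in atTop, ∀ k, pproves R (runFrom w ξ b k) → Sat ξ (suffixW w b))
    (h : coBuchiAcc R ξ w) : Sat (.fut (.glob ξ)) w := by
  rw [sat_fut_glob_iff]
  filter_upwards [hcert, h.eventually_pproves_runFrom] with b hb hp
  exact hb _ (hp ξ (self_mem_tokenSet ξ w b))

def acceptingBirths (R : Set (FLTL Ap)) (ξ : FLTL Ap) (w : Word Ap) (n : ℕ) : Finset ℕ :=
  (range (n + 1)).filter fun b => ∃ ψ, tokState ξ w b n = some ψ ∧ isSink ψ ∧ pproves R ψ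

lemma mpRewardFn_tokenCount_le (n : ℕ) :
    mpRewardFn R (tokenCount ξ w n) ≤ #(acceptingBirths R ξ w n) := by
  refine tsum_le_of_sum_le' (Nat.cast_nonneg _) fun s => ?_
  let fiber (ψ : {χ : FLTL Ap // isSink χ ∧ pproves R χ}) : Finset ℕ :=
    (range (n + 1)).filter fun b => tokState ξ w b n = some ψ.1
  have hdisj : (s : Set _).PairwiseDisjoint fiber := fun ψ₁ _ ψ₂ _ hne =>
    disjoint_left.2 fun b h₁ h₂ => hne <| Subtype.ext <|
      Option.some_injective _ ((mem_filter.1 h₁).2.symm.trans (mem_filter.1 h₂).2)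
  have hsub : s.biUnion fiber ⊆ acceptingBirths R ξ w n := fun b hb => by
    obtain ⟨ψ, -, hb⟩ := mem_biUnion.1 hb
    exact mem_filter.2 ⟨(mem_filter.1 hb).1, ψ.1, (mem_filter.1 hb).2, ψ.2⟩
  calc ∑ ψ ∈ s, (tokenCount ξ w n ψ.1 : ℝ) = #(s.biUnion fiber) := by
        rw [card_biUnion hdisj]; push_cast; rfl
    _ ≤ #(acceptingBirths R ξ w n) := by exact_mod_cast card_le_card hsub

lemma eq_add_sinkDepth_of_mem_acceptingBirths {b n : ℕ} (hb : b ∈ acceptingBirths R ξ w n) :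
    n = b + sinkDepth ξ := by
  obtain ⟨hbn, ψ, hψ, hsink, -⟩ := mem_filter.1 hb
  obtain ⟨hdepth, rfl⟩ := tokState_eq_some_iff.1 hψ
  rw [isSink_runFrom_iff] at hsink
  simp at hbn
  omega

lemma cesaro_mpRewardFn_le {K : ℕ}
    (hK : ∀ b ≥ K, ∀ k, pproves R (runFrom w ξ b k) → Sat ξ (suffixW w b)) (N : ℕ) :
    cesaro (fun n => mpRewardFn R (tokenCount ξ w n)) N ≤
      cesaro (fun b => ind (Sat ξ (suffixW w b))) N + K / N := by
  have hcount := sum_card_le_card_filter_add (D := acceptingBirths R ξ w)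
    (P := fun b => Sat ξ (suffixW w b)) (K := K)
    (fun n₁ n₂ hne => disjoint_left.2 fun b h₁ h₂ => hne <|
      (eq_add_sinkDepth_of_mem_acceptingBirths h₁).trans
        (eq_add_sinkDepth_of_mem_acceptingBirths h₂).symm)
    (fun n b hb => by have := eq_add_sinkDepth_of_mem_acceptingBirths hb; omega)
    (fun n b hb hKb => by
      obtain ⟨-, ψ, hψ, -, hp⟩ := mem_filter.1 hb
      obtain ⟨-, rfl⟩ := tokState_eq_some_iff.1 hψ
      exact hK b hKb _ hp) N
  have hsum : ∑ n ∈ range N, mpRewardFn R (tokenCount ξ w n) ≤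
      ∑ b ∈ range N, ind (Sat ξ (suffixW w b)) + K :=
    calc ∑ n ∈ range N, mpRewardFn R (tokenCount ξ w n)
        ≤ ∑ n ∈ range N, (#(acceptingBirths R ξ w n) : ℝ) :=
          sum_le_sum fun n _ => mpRewardFn_tokenCount_le n
      _ ≤ #((range N).filter fun b => Sat ξ (suffixW w b)) + K := by exact_mod_cast hcount
      _ = ∑ b ∈ range N, ind (Sat ξ (suffixW w b)) + K := by simp [ind, sum_boole]
  unfold cesaro
  rw [← add_div]
  gcongr

lemma sat_freq_of_mpAcc {e : Ext} {c : Cmp} {p : ℚ}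
    (hcert : ∀ᶠ b in atTop, ∀ k, pproves R (runFrom w ξ b k) → Sat ξ (suffixW w b))
    (h : mpAcc R ξ w e c p) : Sat (.freq e c p ξ) w := by
  obtain ⟨K, hK⟩ := eventually_atTop.1 hcert
  refine Cmp.rel_of_le h ?_
  rw [lr_eq_lim, lr_eq_lim]
  refine e.lim_le_lim_of_le_add ?_ ?_ ?_ (tendsto_const_div_atTop_nhds_zero_nat (K : ℝ))
    (.of_forall (cesaro_mpRewardFn_le hK))
  · exact isBoundedUnder_of ⟨0, cesaro_nonneg fun n => tsum_nonneg fun _ => Nat.cast_nonneg _⟩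
  · exact isBoundedUnder_of ⟨1, cesaro_le zero_le_one fun _ => ind_le_one _⟩
  · exact isBoundedUnder_of ⟨0, cesaro_nonneg fun _ => ind_nonneg _⟩

end SlaveAcceptance

section Soundness

variable {Ap : Type}

lemma rsatCond_of_productAccept {R : Set (FLTL Ap)} (hRfin : R.Finite)
    (hRrec : ∀ ρ ∈ R, isRecShape ρ) {w : Word Ap} (hprod : productAccept R w) :
    ∀ σ ∈ R, RsatCond w σ := by
  have hcert (ξ : FLTL Ap) (ih : ∀ ρ ∈ R, ρ ∈ subf ξ → RsatCond w ρ) :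
      ∀ᶠ b in atTop, ∀ k, pproves R (runFrom w ξ b k) → Sat ξ (suffixW w b) :=
    (eventually_sat_substFF_of_pproves_runFrom hRfin hRrec
      fun ρ hρR hρ => (ih ρ hρR hρ).eventually_sat).mono
      fun b hb k hp => sat_of_sat_substFF (hb ξ (self_mem_tokenSet ξ w b) k hp)
  suffices h : ∀ χ, ∀ σ ∈ R, σ ∈ subf χ → RsatCond w σ from
    fun σ hσ => h σ σ hσ (mem_subf_self σ)
  intro χ
  induction χ with
  | fut ξ ih =>
    rintro σ hσ (rfl | hσξ)
    · exact sat_glob_fut_of_buchiAcc (hcert ξ ih) (hprod _ hσ)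
    · exact ih σ hσ hσξ
  | glob ξ ih =>
    rintro σ hσ (rfl | hσξ)
    · exact sat_fut_glob_of_coBuchiAcc (hcert ξ ih) (hprod _ hσ)
    · exact ih σ hσ hσξ
  | freq e c p ξ ih =>
    rintro σ hσ (rfl | hσξ)
    · exact sat_freq_of_mpAcc (hcert ξ ih) (hprod _ hσ)
    · exact ih σ hσ hσξ
  | conj a b iha ihb | disj a b iha ihb | untl a b iha ihb =>
    rintro σ hσ (rfl | hσa | hσb)
    exacts [(hRrec _ hσ).elim, iha σ hσ hσa, ihb σ hσ hσb]
  | next a ih =>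
    rintro σ hσ (rfl | hσa)
    exacts [(hRrec _ hσ).elim, ih σ hσ hσa]
  | tt | ff | atom a | natom a =>
    rintro σ hσ rfl
    exact (hRrec _ hσ).elim

end Soundness

theorem final_automaton_sound_general {Ap : Type} (φ : FLTL Ap)
    (w : Word Ap) (hacc : finalAccept φ w) :
    Sat φ w := by
  obtain ⟨R, hR, hmaster, hprod⟩ := hacc
  have hRfin : R.Finite := (RecSet_finite φ).subset hR
  have hRrec : ∀ ρ ∈ R, isRecShape ρ := fun ρ hρ => (hR hρ).2
  have hRsat : ∀ᶠ t in atTop, ∀ ρ ∈ R, Sat ρ (suffixW w t) := hRfin.eventually_all.2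
    fun ρ hρ => (rsatCond_of_productAccept hRfin hRrec hprod ρ hρ).eventually_sat
  have htokens : ∀ᶠ n in atTop, ∀ ξ ∈ FLTL.glob ⁻¹' R, ∀ χ ∈ tokenSet ξ w n,
      Sat (substFF (unassumed R) χ) (suffixW w n) :=
    (hRfin.preimage (fun _ _ _ _ => FLTL.glob.inj)).eventually_all.2 fun ξ hξ =>
      (hprod _ hξ).eventually_sat_substFF hRfin hRrec fun ρ hρR _ =>
        hRsat.mono fun t ht => ht ρ hρR
  obtain ⟨n, hn, hRn, htok⟩ := (hmaster.and (hRsat.and htokens)).exists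
  refine (sat_masterRun_iff φ w n).1 (hn.sat ?_)
  rintro χ (hχ | hχ)
  · exact hRn χ hχ
  · simp only [Set.mem_iUnion, Set.mem_image] at hχ
    obtain ⟨ξ, hξ, χ, hχ, rfl⟩ := hχ
    exact sat_substFF_mono (RecSet_diff_subset_unassumed φ R) (htok ξ hξ χ hχ)

/-- Proposition 1 (soundness of the final automaton). -/
theorem final_automaton_sound {Ap : Type} [Fintype Ap] (φ : FLTL Ap)
    (hφ : InFrag φ) (w : Word Ap) (hacc : finalAccept φ w) :
    Sat φ w :=
  final_automaton_sound_general φ w hacc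

end Paper

end
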